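/- Let a, b, c be positive integers with b³ > a³c, and let α be the unique positive root of the irreducible polynomial X³ - aX² + bX - c. Then the additive monoid ℕ₀[α] is not finitely generated. -/

import Mathlib

open Polynomial

noncomputable def evalN (α : ℝ) (f : Polynomial ℕ) : ℝ :=
  Polynomial.eval₂ (Nat.castRingHom ℝ) α f

/-- The additive monoid ℕ₀[α] = {f(α) : f ∈ ℕ₀[X]} ⊆ ℝ. -/
noncomputable def Nmon (α : ℝ) : AddSubmonoid ℝ where
  carrier := Set.range (evalN α)
  zero_mem' := ⟨0, by simp [evalN]⟩
  add_mem' := fun ha hb => by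
    obtain ⟨f, rfl⟩ := ha
    obtain ⟨g, rfl⟩ := hb
    exact ⟨f + g, by simp [evalN]⟩

/-- `a` is an atom of ℕ₀[α]. -/
def IsAtomIn (α : ℝ) (a : ℝ) : Prop :=
  a ∈ Nmon α ∧ a ≠ 0 ∧
    ∀ b c : ℝ, b ∈ Nmon α → c ∈ Nmon α → a = b + c → b = 0 ∨ c = 0

/-- ℕ₀[α] is antimatter: it has no atoms. -/
def Antimatter (α : ℝ) : Prop := ∀ a : ℝ, ¬ IsAtomIn α a

/-- ℕ₀[α] is atomic: every nonzero element is a finite sum of atoms. -/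
def AtomicM (α : ℝ) : Prop :=
  ∀ x ∈ Nmon α, x ≠ 0 →
    ∃ s : Multiset ℝ, (∀ a ∈ s, IsAtomIn α a) ∧ s.sum = x

/-- ℕ₀[α] is a unique factorization monoid. -/
def IsUFM (α : ℝ) : Prop :=
  ∀ s t : Multiset ℝ, (∀ a ∈ s, IsAtomIn α a) → (∀ a ∈ t, IsAtomIn α a) →
    s.sum = t.sum → s = t

/-- ℕ₀[α] is a length-factorial monoid: factorizations of equal length
of the same element coincide. -/
def IsLFM (α : ℝ) : Prop :=
  ∀ s t : Multiset ℝ, (∀ a ∈ s, IsAtomIn α a) → (∀ a ∈ t, IsAtomIn α a) →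
    s.sum = t.sum → Multiset.card s = Multiset.card t → s = t

/-- `m` is the primitive integer minimal polynomial of `α`
(with positive leading coefficient). -/
def IsMinPolyZ (α : ℝ) (m : Polynomial ℤ) : Prop :=
  Polynomial.aeval α m = 0 ∧ m.IsPrimitive ∧ 0 < m.leadingCoeff ∧
    ∀ g : Polynomial ℤ, g ≠ 0 → Polynomial.aeval α g = 0 → m.degree ≤ g.degree

lemma evalN_nonneg {α : ℝ} (hα : 0 ≤ α) (f : Polynomial ℕ) : 0 ≤ evalN α f := by
  rw [evalN, Polynomial.eval₂_eq_sum, Polynomial.sum]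
  refine Finset.sum_nonneg fun i _ => ?_
  simp only [Nat.castRingHom, RingHom.coe_mk, MonoidHom.coe_mk, OneHom.coe_mk]
  exact mul_nonneg (by simp) (pow_nonneg hα _)

lemma abs_multiset_prod_le {r : ℝ} (hr : 0 ≤ r) (s : Multiset ℂ)
    (h : ∀ z ∈ s, ‖z‖ ≤ r) : ‖s.prod‖ ≤ r ^ Multiset.card s := by
  induction s using Multiset.induction with
  | empty => simp
  | cons a s ih =>
    simp only [Multiset.prod_cons, norm_mul, Multiset.card_cons, pow_succ']
    exact mul_le_mul (h a (Multiset.mem_cons_self a s))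
      (ih fun z hz => h z (Multiset.mem_cons_of_mem hz))
      (norm_nonneg _) hr


/-- if b³ > a³c and α is the unique positive root of the irreducible
cubic X³ - aX² + bX - c, then ℕ₀[α] is not finitely generated. -/
theorem stmt15 (a b c : ℤ) (ha : 0 < a) (hb : 0 < b) (hc : 0 < c)
    (hcond : a ^ 3 * c < b ^ 3) (α : ℝ) (hα : 0 < α)
    (hmin : minpoly ℚ α =
      X ^ 3 - Polynomial.C (a : ℚ) * X ^ 2 + Polynomial.C (b : ℚ) * X - Polynomial.C (c : ℚ))
    (huniq : ∀ x : ℝ, 0 < x → Polynomial.aeval x (minpoly ℚ α) = 0 → x = α) :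
    ¬ (Nmon α).FG := by
  classical
  intro hFG
  have haR : (0:ℝ) < (a:ℝ) := by exact_mod_cast ha
  have hbR : (0:ℝ) < (b:ℝ) := by exact_mod_cast hb
  have hcR : (0:ℝ) < (c:ℝ) := by exact_mod_cast hc
  have hcondR : (a:ℝ) ^ 3 * c < (b:ℝ) ^ 3 := by exact_mod_cast hcond
  set P : ℚ[X] := X ^ 3 - C (a : ℚ) * X ^ 2 + C (b : ℚ) * X - C (c : ℚ) with hPdef
  -- aeval of P over any ℚ-algebra
  have haevalP : ∀ (x : ℝ), Polynomial.aeval x P = x ^ 3 - a * x ^ 2 + b * x - c := by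
    intro x
    simp [hPdef, map_sub, map_add, map_mul, map_pow]
  -- α is a root
  have hroot : α ^ 3 - a * α ^ 2 + b * α - c = 0 := by
    have h0 := minpoly.aeval ℚ α
    rw [hmin] at h0
    rwa [haevalP α] at h0
  -- α < b / a
  have hαba : α < (b:ℝ) / a := by
    set q : ℝ → ℝ := fun x => x ^ 3 - a * x ^ 2 + b * x - c with hq
    have hqc : ContinuousOn q (Set.Icc 0 ((b:ℝ)/a)) := by fun_prop
    have hq0 : q 0 < 0 := by simp [hq]; positivity
    have hqba : 0 < q ((b:ℝ)/a) := by
      have h1 : q ((b:ℝ)/a) = (b:ℝ)^3 / a^3 - c := by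
        simp only [hq]; field_simp; ring
      rw [h1, sub_pos, lt_div_iff₀ (by positivity)]
      linarith [hcondR]
    have hsub := intermediate_value_Ioo (le_of_lt (by positivity : (0:ℝ) < (b:ℝ)/a)) hqc
    have h0mem : (0:ℝ) ∈ Set.Ioo (q 0) (q ((b:ℝ)/a)) := ⟨hq0, hqba⟩
    obtain ⟨x, hx, hqx⟩ := hsub h0mem
    have hxα : x = α := by
      apply huniq x hx.1
      rw [hmin, haevalP x]
      exact hqx
    rw [← hxα]; exact hx.2
  -- α ^ 3 < c
  have hα3c : α ^ 3 < c := by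
    have h1 : (a:ℝ) * α < b := by
      rw [← lt_div_iff₀' haR] at *; exact hαba
    nlinarith [hroot, h1, hα]
  -- complex root of large modulus
  set Pc : ℂ[X] := P.map (algebraMap ℚ ℂ) with hPcdef
  have hPmonic : P.Monic := by
    unfold P; monicity!
  have hPdeg : P.natDegree = 3 := by
    unfold P; compute_degree!
  have hPcmonic : Pc.Monic := hPmonic.map _
  have hPcdeg : Pc.natDegree = 3 := by
    rw [hPcdef, natDegree_map, hPdeg]
  have hsplits : Pc.Splits := IsAlgClosed.splits Pc
  have hcard : Multiset.card Pc.roots = 3 := by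
    rw [splits_iff_card_roots.mp hsplits, hPcdeg]
  have hcoeff0 : Pc.coeff 0 = -(c:ℂ) := by
    simp [hPcdef, hPdef, coeff_map, coeff_sub, coeff_add, coeff_C_mul, coeff_X_pow]
  have hprod : Pc.roots.prod = (c:ℂ) := by
    have h1 := hsplits.coeff_zero_eq_prod_roots_of_monic hPcmonic
    rw [hcoeff0, hPcdeg] at h1
    rw [show ((-1:ℂ)) ^ 3 = -1 by norm_num, neg_one_mul] at h1
    exact (neg_injective h1).symm
  have hex : ∃ β ∈ Pc.roots, α < ‖β‖ := by
    by_contra h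
    push_neg at h
    have h1 : ‖Pc.roots.prod‖ ≤ α ^ Multiset.card Pc.roots :=
      abs_multiset_prod_le hα.le _ h
    rw [hprod, hcard] at h1
    have h2 : ‖((c:ℤ):ℂ)‖ = (c:ℝ) := by
      rw [Complex.norm_intCast]
      exact_mod_cast abs_of_pos hcR
    rw [h2] at h1
    linarith
  obtain ⟨β, hβmem, hβ⟩ := hex
  have hβroot : Polynomial.aeval β P = 0 := by
    have := isRoot_of_mem_roots hβmem
    rwa [hPcdef, IsRoot, eval_map, ← aeval_def] at this
  -- the two evaluation ring homs
  set φ : Polynomial ℕ →+* ℝ := eval₂RingHom (Nat.castRingHom ℝ) α with hφdef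
  set ψ : Polynomial ℕ →+* ℂ := eval₂RingHom (Nat.castRingHom ℂ) β with hψdef
  have hφeq : ∀ f, φ f = evalN α f := fun f => rfl
  -- compatibility with aeval over ℚ
  have hcompR : (algebraMap ℚ ℝ).comp (Nat.castRingHom ℚ) = Nat.castRingHom ℝ :=
    Subsingleton.elim _ _
  have hcompC : (algebraMap ℚ ℂ).comp (Nat.castRingHom ℚ) = Nat.castRingHom ℂ :=
    Subsingleton.elim _ _
  have hmapR : ∀ f : Polynomial ℕ, Polynomial.aeval α (f.map (Nat.castRingHom ℚ)) = φ f := by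
    intro f
    rw [hφdef, coe_eval₂RingHom, aeval_def, eval₂_map, hcompR]
  have hmapC : ∀ f : Polynomial ℕ, Polynomial.aeval β (f.map (Nat.castRingHom ℚ)) = ψ f := by
    intro f
    rw [hψdef, coe_eval₂RingHom, aeval_def, eval₂_map, hcompC]
  -- well-definedness of the conjugate evaluation
  have hcongr : ∀ f g : Polynomial ℕ, φ f = φ g → ψ f = ψ g := by
    intro f g hfg
    set F := f.map (Nat.castRingHom ℚ) with hF
    set G := g.map (Nat.castRingHom ℚ) with hG
    have hz : Polynomial.aeval α (F - G) = 0 := by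
      rw [map_sub, hmapR, hmapR, hfg, sub_self]
    obtain ⟨q, hq⟩ := minpoly.dvd ℚ α hz
    have hβz : Polynomial.aeval β (F - G) = 0 := by
      rw [hq, map_mul, hmin, hβroot, zero_mul]
    rw [map_sub, hmapC, hmapC, sub_eq_zero] at hβz
    exact hβz
  -- finite generation
  obtain ⟨S, hS⟩ := hFG
  have hSsub : (S : Set ℝ) ⊆ (Nmon α : Set ℝ) := hS ▸ AddSubmonoid.subset_closure
  have hmemNonneg : ∀ y ∈ Nmon α, 0 ≤ y := by
    rintro y ⟨f, rfl⟩
    exact evalN_nonneg hα.le f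
  -- choice of representing polynomials
  set g : ℝ → Polynomial ℕ := fun s =>
    if h : (∃ f, evalN α f = s) ∧ s ≠ 0 then h.1.choose else 0 with hgdef
  have hg0 : g 0 = 0 := by
    rw [hgdef]; simp
  have hgS : ∀ s ∈ (S : Set ℝ), φ (g s) = s := by
    intro s hs
    by_cases h0 : s = 0
    · rw [h0, hg0, map_zero]
    · have hmem : s ∈ Nmon α := hSsub hs
      obtain ⟨f, hf⟩ := hmem
      have hcond' : (∃ f, evalN α f = s) ∧ s ≠ 0 := ⟨⟨f, hf⟩, h0⟩
      rw [hφeq, hgdef]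
      dsimp only
      rw [dif_pos hcond']
      exact hcond'.1.choose_spec
  -- T nonempty
  set T := S.filter (fun s => (0:ℝ) < s) with hTdef
  have hαmem : α ∈ Nmon α := ⟨X, by simp [evalN]⟩
  by_cases hT : T.Nonempty
  swap
  · rw [Finset.not_nonempty_iff_eq_empty] at hT
    have hSz : ∀ s ∈ (S : Set ℝ), s = 0 := by
      intro s hs
      have h1 : 0 ≤ s := hmemNonneg s (hSsub hs)
      by_contra hne
      have : s ∈ T := Finset.mem_filter.mpr ⟨hs, lt_of_le_of_ne h1 (Ne.symm hne)⟩
      rw [hT] at this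
      exact absurd this (Finset.notMem_empty s)
    rw [← hS] at hαmem
    obtain ⟨l, hl, hsum⟩ := AddSubmonoid.exists_list_of_mem_closure hαmem
    have : l.sum = 0 := List.sum_eq_zero fun y hy => hSz y (hl y hy)
    rw [this] at hsum
    exact absurd hsum.symm (ne_of_gt hα)
  set m : ℝ := T.min' hT with hmdef
  have hmpos : 0 < m := (Finset.mem_filter.mp (T.min'_mem hT)).2
  set M : ℝ := ∑ s ∈ S, ‖ψ (g s)‖ with hMdef
  have hM : 0 ≤ M := Finset.sum_nonneg fun s _ => norm_nonneg _
  -- per-element bound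
  have hper : ∀ y ∈ (S : Set ℝ), ‖ψ (g y)‖ * m ≤ y * M := by
    intro y hy
    by_cases h0 : y = 0
    · rw [h0, hg0, map_zero, norm_zero, zero_mul, zero_mul]
    · have hypos : 0 < y := lt_of_le_of_ne (hmemNonneg y (hSsub hy)) (Ne.symm h0)
      have hyT : y ∈ T := Finset.mem_filter.mpr ⟨hy, hypos⟩
      have hmy : m ≤ y := Finset.min'_le T y hyT
      have hgM : ‖ψ (g y)‖ ≤ M :=
        Finset.single_le_sum (f := fun s => ‖ψ (g s)‖)
          (fun s _ => norm_nonneg _) hy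
      calc ‖ψ (g y)‖ * m ≤ M * m :=
             mul_le_mul_of_nonneg_right hgM hmpos.le
        _ ≤ M * y := mul_le_mul_of_nonneg_left hmy hM
        _ = y * M := mul_comm _ _
  -- list bound
  have hlist : ∀ l : List ℝ, (∀ y ∈ l, y ∈ (S : Set ℝ)) →
      ‖ψ ((l.map g).sum)‖ * m ≤ l.sum * M := by
    intro l
    induction l with
    | nil => intro _; simp
    | cons y l ih =>
      intro hl
      have h1 := hper y (hl y List.mem_cons_self)
      have h2 := ih fun z hz => hl z (List.mem_cons_of_mem y hz)
      simp only [List.map_cons, List.sum_cons, map_add]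
      calc ‖ψ (g y) + ψ ((l.map g).sum)‖ * m
          ≤ (‖ψ (g y)‖ + ‖ψ ((l.map g).sum)‖) * m :=
            mul_le_mul_of_nonneg_right (norm_add_le _ _) hmpos.le
        _ = ‖ψ (g y)‖ * m + ‖ψ ((l.map g).sum)‖ * m := by ring
        _ ≤ y * M + l.sum * M := add_le_add h1 h2
        _ = (y + l.sum) * M := by ring
  -- power bound
  have hk : ∀ k : ℕ, ‖β‖ ^ k * m ≤ α ^ k * M := by
    intro k
    have hxk : α ^ k ∈ Nmon α := ⟨X ^ k, by simp [evalN]⟩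
    rw [← hS] at hxk
    obtain ⟨l, hl, hsum⟩ := AddSubmonoid.exists_list_of_mem_closure hxk
    have h1 : φ ((l.map g).sum) = α ^ k := by
      rw [map_list_sum, List.map_map]
      have h0 : l.map (φ ∘ g) = l.map id :=
        List.map_congr_left fun y hy => hgS y (hl y hy)
      rw [h0, List.map_id, hsum]
    have h2 : ψ ((l.map g).sum) = β ^ k := by
      have hXk : φ (X ^ k : Polynomial ℕ) = α ^ k := by
        simp [hφdef]
      have := hcongr ((l.map g).sum) (X ^ k) (h1.trans hXk.symm)
      rw [this, hψdef]
      simp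
    calc ‖β‖ ^ k * m = ‖β ^ k‖ * m := by rw [norm_pow]
      _ = ‖ψ ((l.map g).sum)‖ * m := by rw [h2]
      _ ≤ l.sum * M := hlist l hl
      _ = α ^ k * M := by rw [hsum]
  -- contradiction
  have hr : 1 < ‖β‖ / α := (one_lt_div hα).mpr hβ
  obtain ⟨k, hk2⟩ := pow_unbounded_of_one_lt (M / m) hr
  have h3 : (‖β‖ / α) ^ k ≤ M / m := by
    rw [div_pow, div_le_div_iff₀ (pow_pos hα k) hmpos]
    calc ‖β‖ ^ k * m ≤ α ^ k * M := hk k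
      _ = M * α ^ k := mul_comm _ _
  linarith
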